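/- Let \Gamma be an imbrex geometry of symplectic rank 2 whose symplecta are thick, let H be a symplecton and \mathcal{S} a spread of H induced by a block B. Let L1, L2 be non-concurrent lines of H with L1 in \mathcal{S}, let B1, B2 be the blocks containing L1, L2 respectively, let x1 be a point of B1 not on L1 and x2 the unique point of B2 collinear with x1. Then the block containing x1 and x2 contains no point of H. -/
import Mathlib


namespace ImbrexGeom

variable {P : Type*}

/-- Two points are collinear: equal or on a common line. -/
def Col (Ls : Set (Set P)) (x y : P) : Prop :=
  x = y ∨ ∃ L ∈ Ls, x ∈ L ∧ y ∈ L

/-- A line of the geometry induced on a subset `S`. -/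
def LineIn (Ls : Set (Set P)) (S : Set P) (L : Set P) : Prop :=
  L ∈ Ls ∧ L ⊆ S

/-- Collinearity inside the geometry induced on `S`. -/
def ColIn (Ls : Set (Set P)) (S : Set P) (x y : P) : Prop :=
  x = y ∨ ∃ L, LineIn Ls S L ∧ x ∈ L ∧ y ∈ L

/-- A subspace of the geometry induced on `S`. -/
def IsSubspaceIn (Ls : Set (Set P)) (S T : Set P) : Prop :=
  T ⊆ S ∧ ∀ L, LineIn Ls S L → ∀ x ∈ L, ∀ y ∈ L, x ≠ y → x ∈ T → y ∈ T → L ⊆ T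

def IsSubspace (Ls : Set (Set P)) (T : Set P) : Prop :=
  IsSubspaceIn Ls Set.univ T

/-- A convex subspace (adapted to diameter 2): closed under taking common
neighbours of non-collinear pairs, i.e. all points on shortest paths. -/
def IsConvex (Ls : Set (Set P)) (S : Set P) : Prop :=
  IsSubspace Ls S ∧ ∀ x ∈ S, ∀ y ∈ S, ¬ Col Ls x y →
    ∀ z, Col Ls x z → Col Ls z y → z ∈ S

/-- `S` is the smallest convex subspace containing `x` and `y`. -/
def SmallestConvex (Ls : Set (Set P)) (x y : P) (S : Set P) : Prop :=
  IsConvex Ls S ∧ x ∈ S ∧ y ∈ S ∧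
    ∀ S', IsConvex Ls S' → x ∈ S' → y ∈ S' → S ⊆ S'

/-- A singular subspace of the geometry induced on `S`. -/
def IsSingularIn (Ls : Set (Set P)) (S T : Set P) : Prop :=
  IsSubspaceIn Ls S T ∧ ∀ x ∈ T, ∀ y ∈ T, ColIn Ls S x y

def IsSingular (Ls : Set (Set P)) (T : Set P) : Prop :=
  IsSingularIn Ls Set.univ T

/-- A maximal singular subspace of the geometry induced on `S`. -/
def MaxSingularIn (Ls : Set (Set P)) (S T : Set P) : Prop :=
  IsSingularIn Ls S T ∧ ∀ T', IsSingularIn Ls S T' → T ⊆ T' → T' = T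

/-- A block: a maximal singular subspace of the whole geometry. -/
def IsBlock (Ls : Set (Set P)) (B : Set P) : Prop :=
  MaxSingularIn Ls Set.univ B

/-- The geometry induced on `S` has polar rank `r`: every nested (strictly
increasing) sequence of singular subspaces has length at most `r + 1`, and
one of length `r + 1` exists. -/
def HasPolarRank (Ls : Set (Set P)) (S : Set P) (r : ℕ) : Prop :=
  (∀ n : ℕ, ∀ f : Fin n → Set P, (∀ i, IsSingularIn Ls S (f i)) →
      (∀ i j, i < j → f i ⊂ f j) → n ≤ r + 1) ∧
  ∃ f : Fin (r + 1) → Set P, (∀ i, IsSingularIn Ls S (f i)) ∧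
      ∀ i j : Fin (r + 1), i < j → f i ⊂ f j

/-- The geometry induced on `S` is a polar space of rank `r`
(Buekenhout–Shult axioms). -/
def IsPolarSpace (Ls : Set (Set P)) (S : Set P) (r : ℕ) : Prop :=
  (∀ L, LineIn Ls S L → ∃ x ∈ L, ∃ y ∈ L, ∃ z ∈ L, x ≠ y ∧ x ≠ z ∧ y ≠ z) ∧
  (∀ x ∈ S, ∃ y ∈ S, ¬ ColIn Ls S x y) ∧
  HasPolarRank Ls S r ∧
  (∀ x ∈ S, ∀ L, LineIn Ls S L → x ∉ L →
      (∃! y, y ∈ L ∧ ColIn Ls S x y) ∨ ∀ y ∈ L, ColIn Ls S x y)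

/-- A strong parapolar space of diameter 2. -/
structure StrongParapolar2 (Ls : Set (Set P)) : Prop where
  connected : ∀ x y : P, Relation.ReflTransGen (Col Ls) x y
  pps1 : ∀ x : P, ∀ L ∈ Ls, x ∉ L →
      (∀ y ∈ L, ¬ Col Ls x y) ∨ (∃! y, y ∈ L ∧ Col Ls x y) ∨ ∀ y ∈ L, Col Ls x y
  pps1_none : ∃ x : P, ∃ L ∈ Ls, ∀ y ∈ L, ¬ Col Ls x y
  pps1_one : ∃ x : P, ∃ L ∈ Ls, x ∉ L ∧ ∃! y, y ∈ L ∧ Col Ls x y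
  pps1_all : ∃ x : P, ∃ L ∈ Ls, x ∉ L ∧ ∀ y ∈ L, Col Ls x y
  pps2 : ∀ x y : P, ¬ Col Ls x y →
      ∃ S, SmallestConvex Ls x y S ∧ ∃ r, 2 ≤ r ∧ IsPolarSpace Ls S r

/-- A symplecton: the smallest convex subspace of a non-collinear pair. -/
def IsSymp (Ls : Set (Set P)) (S : Set P) : Prop :=
  ∃ x y, ¬ Col Ls x y ∧ SmallestConvex Ls x y S

/-- (PPS4): every nested sequence of singular subspaces has finite length. -/
def PPS4 (Ls : Set (Set P)) : Prop :=
  ∀ f : ℕ → Set P, (∀ n, IsSingular Ls (f n)) → ¬ ∀ n, f n ⊂ f (n + 1)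

/-- The imbrex axiom (Imb). -/
def Imb (Ls : Set (Set P)) : Prop :=
  ∀ x : P, ∀ L ∈ Ls, (∀ y ∈ L, ¬ Col Ls x y) →
    ∀ y₁ ∈ L, ∀ y₂ ∈ L, y₁ ≠ y₂ →
      ∀ S₁ S₂, SmallestConvex Ls x y₁ S₁ → SmallestConvex Ls x y₂ S₂ →
        MaxSingularIn Ls S₁ (S₁ ∩ S₂) ∧ MaxSingularIn Ls S₂ (S₁ ∩ S₂)

/-- An imbrex geometry. -/
structure ImbrexGeometry (Ls : Set (Set P)) : Prop where
  spp : StrongParapolar2 Ls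
  pps4 : PPS4 Ls
  imb : Imb Ls

/-- The geometry has symplectic rank `r`: all symplecta have polar rank `r`. -/
def SympRank (Ls : Set (Set P)) (r : ℕ) : Prop :=
  ∀ S, IsSymp Ls S → HasPolarRank Ls S r

/-- All symplecta are thick generalized quadrangles: every point of a
symplecton lies on at least three lines of it (lines already have at least
three points by the polar space axioms). -/
def ThickSymps (Ls : Set (Set P)) : Prop :=
  ∀ S, IsSymp Ls S → ∀ x ∈ S, ∃ L₁ L₂ L₃, LineIn Ls S L₁ ∧ LineIn Ls S L₂ ∧
    LineIn Ls S L₃ ∧ L₁ ≠ L₂ ∧ L₁ ≠ L₃ ∧ L₂ ≠ L₃ ∧ x ∈ L₁ ∧ x ∈ L₂ ∧ x ∈ L₃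

/-- The perp of a set of lines in the geometry induced on `S`: all lines of
`S` concurrent with every member of the set. -/
def PerpSet (Ls : Set (Set P)) (S : Set P) (T : Set (Set P)) : Set (Set P) :=
  {N | LineIn Ls S N ∧ ∀ M ∈ T, (N ∩ M).Nonempty}

/-- A pair of lines is regular. -/
def RegularPair (Ls : Set (Set P)) (S : Set P) (L M : Set P) : Prop :=
  ∃ L' M', L' ∈ PerpSet Ls S {L, M} ∧ M' ∈ PerpSet Ls S {L, M} ∧ L' ≠ M' ∧
    PerpSet Ls S (PerpSet Ls S {L, M}) = PerpSet Ls S {L', M'}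

/-- `N` is a member of the spread of the symplecton `H` induced by the
block `B`: `N = B' ∩ H` for some block `B'` meeting `B`. -/
def InSpreadOf (Ls : Set (Set P)) (H B : Set P) (N : Set P) : Prop :=
  ∃ B', IsBlock Ls B' ∧ (B' ∩ B).Nonempty ∧ N = B' ∩ H

section AuxLemmas

variable {Ls : Set (Set P)} {H : Set P}

lemma col_symm {x y : P} (h : Col Ls x y) : Col Ls y x := by
  rcases h with h | ⟨L, hL, hx, hy⟩
  · exact Or.inl h.symm
  · exact Or.inr ⟨L, hL, hy, hx⟩

lemma colIn_refl (Ls : Set (Set P)) (S : Set P) (x : P) : ColIn Ls S x x := Or.inl rfl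

lemma colIn_symm {S : Set P} {x y : P} (h : ColIn Ls S x y) : ColIn Ls S y x := by
  rcases h with h | ⟨L, hL, hx, hy⟩
  · exact Or.inl h.symm
  · exact Or.inr ⟨L, hL, hy, hx⟩

lemma col_of_colIn {S : Set P} {x y : P} (h : ColIn Ls S x y) : Col Ls x y := by
  rcases h with h | ⟨L, hL, hx, hy⟩
  · exact Or.inl h
  · exact Or.inr ⟨L, hL.1, hx, hy⟩

lemma colIn_of_col (hH : IsSubspaceIn Ls Set.univ H) {x y : P}
    (hx : x ∈ H) (hy : y ∈ H) (h : Col Ls x y) : ColIn Ls H x y := by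
  rcases h with h | ⟨L, hL, hxL, hyL⟩
  · exact Or.inl h
  by_cases hxy : x = y
  · exact Or.inl hxy
  · exact Or.inr ⟨L, ⟨hL, hH.2 L ⟨hL, Set.subset_univ L⟩ x hxL y hyL hxy hx hy⟩, hxL, hyL⟩

/-- The perp of a point of `H` inside `H` is a subspace of `H`. -/
lemma perp_subspaceIn {r : ℕ} (hpol : IsPolarSpace Ls H r) {a : P} (ha : a ∈ H) :
    IsSubspaceIn Ls H {u | u ∈ H ∧ ColIn Ls H a u} := by
  refine ⟨fun u hu => hu.1, ?_⟩
  intro M hM x hxM y hyM hxy hxT hyT w hw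
  refine ⟨hM.2 hw, ?_⟩
  by_cases haM : a ∈ M
  · exact Or.inr ⟨M, hM, haM, hw⟩
  · rcases hpol.2.2.2 a ha M hM haM with ⟨u, _, huniq⟩ | hall
    · exact absurd ((huniq x ⟨hxM, hxT.2⟩).trans (huniq y ⟨hyM, hyT.2⟩).symm) hxy
    · exact hall w hw

/-- The subspace of `H` generated by a set. -/
def spanIn (Ls : Set (Set P)) (H A : Set P) : Set P :=
  ⋂₀ {V | IsSubspaceIn Ls H V ∧ A ⊆ V}

lemma subset_spanIn (Ls : Set (Set P)) (H A : Set P) : A ⊆ spanIn Ls H A :=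
  fun _ ha => Set.mem_sInter.2 fun _ hV => hV.2 ha

lemma spanIn_le {A V : Set P} (hV : IsSubspaceIn Ls H V) (hAV : A ⊆ V) :
    spanIn Ls H A ⊆ V :=
  Set.sInter_subset_of_mem ⟨hV, hAV⟩

lemma spanIn_mono {A B : Set P} (h : A ⊆ B) : spanIn Ls H A ⊆ spanIn Ls H B :=
  fun u hu => Set.mem_sInter.2 fun V hV => Set.mem_sInter.1 hu V ⟨hV.1, h.trans hV.2⟩

/-- The subspace of `H` generated by a clique is a singular subspace of `H`. -/
lemma clique_spanIn {r : ℕ} (hpol : IsPolarSpace Ls H r) {A : Set P} (hA : A ⊆ H)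
    (hcl : ∀ a ∈ A, ∀ b ∈ A, ColIn Ls H a b) :
    IsSingularIn Ls H (spanIn Ls H A) := by
  have hHsubH : IsSubspaceIn Ls H H := ⟨subset_rfl, fun L hL _ _ _ _ _ _ _ => hL.2⟩
  have hCH : spanIn Ls H A ⊆ H := spanIn_le hHsubH hA
  have hsub : IsSubspaceIn Ls H (spanIn Ls H A) := by
    refine ⟨hCH, ?_⟩
    intro M hM x hxM y hyM hxy hxC hyC w hw
    exact Set.mem_sInter.2 fun V hV =>
      hV.1.2 M hM x hxM y hyM hxy (Set.mem_sInter.1 hxC V hV)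
        (Set.mem_sInter.1 hyC V hV) hw
  have hperp : ∀ a ∈ A, spanIn Ls H A ⊆ {u | u ∈ H ∧ ColIn Ls H a u} := fun a ha =>
    spanIn_le (perp_subspaceIn hpol (hA ha)) (fun b hb => ⟨hA hb, hcl a ha b hb⟩)
  refine ⟨hsub, ?_⟩
  intro u hu v hv
  have huH : u ∈ H := hCH hu
  have : spanIn Ls H A ⊆ {w | w ∈ H ∧ ColIn Ls H u w} :=
    spanIn_le (perp_subspaceIn hpol huH)
      (fun a ha => ⟨hA ha, colIn_symm (hperp a ha hu).2⟩)
  exact (this hv).2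

/-- No "triangle with an external half-collinear point" in a rank-2 symplecton. -/
lemma delta_config {r : ℕ} (hpol : IsPolarSpace Ls H r) (hrk2 : HasPolarRank Ls H 2)
    {p g z s : P} (hp : p ∈ H) (hg : g ∈ H) (hz : z ∈ H) (hs : s ∈ H)
    (hpg : ColIn Ls H p g) (hpz : ColIn Ls H p z) (hgz : ColIn Ls H g z)
    (hne : p ≠ g) (hsp : ColIn Ls H s p) (hsg : ColIn Ls H s g)
    (hsz : ¬ ColIn Ls H s z) : False := by
  classical
  have hA2 : ({p, g} : Set P) ⊆ H := by
    intro b hb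
    simp only [Set.mem_insert_iff, Set.mem_singleton_iff] at hb
    rcases hb with rfl | rfl
    exacts [hp, hg]
  have hA3 : ({p, g, z} : Set P) ⊆ H := by
    intro b hb
    simp only [Set.mem_insert_iff, Set.mem_singleton_iff] at hb
    rcases hb with rfl | rfl | rfl
    exacts [hp, hg, hz]
  have hclique2 : ∀ a ∈ ({p, g} : Set P), ∀ b ∈ ({p, g} : Set P), ColIn Ls H a b := by
    intro a ha b hb
    simp only [Set.mem_insert_iff, Set.mem_singleton_iff] at ha hb
    rcases ha with rfl | rfl <;> rcases hb with rfl | rfl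
    exacts [colIn_refl Ls H _, hpg, colIn_symm hpg, colIn_refl Ls H _]
  have hclique3 : ∀ a ∈ ({p, g, z} : Set P), ∀ b ∈ ({p, g, z} : Set P), ColIn Ls H a b := by
    intro a ha b hb
    simp only [Set.mem_insert_iff, Set.mem_singleton_iff] at ha hb
    rcases ha with rfl | rfl | rfl <;> rcases hb with rfl | rfl | rfl
    exacts [colIn_refl Ls H _, hpg, hpz, colIn_symm hpg, colIn_refl Ls H _, hgz,
      colIn_symm hpz, colIn_symm hgz, colIn_refl Ls H _]
  have hS2 := clique_spanIn hpol hA2 hclique2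
  have hS3 := clique_spanIn hpol hA3 hclique3
  have hempty : IsSingularIn Ls H (∅ : Set P) :=
    ⟨⟨Set.empty_subset H, fun _ _ x _ _ _ _ hx _ => absurd hx (Set.notMem_empty x)⟩,
      fun x hx => absurd hx (Set.notMem_empty x)⟩
  have hsing1 : IsSingularIn Ls H ({p} : Set P) := by
    refine ⟨⟨Set.singleton_subset_iff.2 hp, ?_⟩, ?_⟩
    · intro L _ x _ y _ hxy hxT hyT
      simp only [Set.mem_singleton_iff] at hxT hyT
      exact absurd (hxT.trans hyT.symm) hxy
    · intro x hx y hy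
      simp only [Set.mem_singleton_iff] at hx hy
      subst hx; subst hy
      exact colIn_refl Ls H _
  have hpC2 : p ∈ spanIn Ls H {p, g} := subset_spanIn Ls H _ (by simp)
  have hgC2 : g ∈ spanIn Ls H {p, g} := subset_spanIn Ls H _ (by simp)
  have hzC3 : z ∈ spanIn Ls H {p, g, z} := subset_spanIn Ls H _ (by simp)
  have hzC2 : z ∉ spanIn Ls H {p, g} := by
    intro hz'
    refine hsz ?_
    have hsubperp : spanIn Ls H {p, g} ⊆ {u | u ∈ H ∧ ColIn Ls H s u} := by
      refine spanIn_le (perp_subspaceIn hpol hs) ?_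
      intro b hb
      simp only [Set.mem_insert_iff, Set.mem_singleton_iff] at hb
      rcases hb with rfl | rfl
      exacts [⟨hp, hsp⟩, ⟨hg, hsg⟩]
    exact (hsubperp hz').2
  have h01 : (∅ : Set P) ⊂ {p} := Set.empty_ssubset.2 ⟨p, rfl⟩
  have h12 : ({p} : Set P) ⊂ spanIn Ls H {p, g} := by
    rw [Set.ssubset_def]
    exact ⟨Set.singleton_subset_iff.2 hpC2,
      fun hle => hne (Set.mem_singleton_iff.1 (hle hgC2)).symm⟩
  have h23 : spanIn Ls H {p, g} ⊂ spanIn Ls H {p, g, z} := by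
    rw [Set.ssubset_def]
    exact ⟨spanIn_mono (by intro b hb; simp only [Set.mem_insert_iff,
        Set.mem_singleton_iff] at hb ⊢; tauto),
      fun hle => hzC2 (hle hzC3)⟩
  have h02 := h01.trans h12
  have h03 := h02.trans h23
  have h13 := h12.trans h23
  have hsingf : ∀ i : Fin 4,
      IsSingularIn Ls H ((![∅, {p}, spanIn Ls H {p, g}, spanIn Ls H {p, g, z}]) i) := by
    intro i
    fin_cases i
    · exact hempty
    · exact hsing1
    · exact hS2
    · exact hS3
  have hchain : ∀ i j : Fin 4, i < j →
      (![∅, {p}, spanIn Ls H {p, g}, spanIn Ls H {p, g, z}]) i ⊂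
        (![∅, {p}, spanIn Ls H {p, g}, spanIn Ls H {p, g, z}]) j := by
    intro i j hij
    fin_cases i <;> fin_cases j <;>
      first
        | exact absurd hij (by decide)
        | exact h01
        | exact h02
        | exact h03
        | exact h12
        | exact h13
        | exact h23
  have hbound := hrk2.1 4 _ hsingf hchain
  omega

lemma bs_exists {r : ℕ} (hpol : IsPolarSpace Ls H r) {x : P} {L : Set P}
    (hx : x ∈ H) (hL : LineIn Ls H L) (hxL : x ∉ L) : ∃ y ∈ L, ColIn Ls H x y := by
  rcases hpol.2.2.2 x hx L hL hxL with ⟨y, ⟨hyL, hyc⟩, _⟩ | hall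
  · exact ⟨y, hyL, hyc⟩
  · obtain ⟨a, haL, -⟩ := hpol.1 L hL
    exact ⟨a, haL, hall a haL⟩

/-- Key lemma: in a rank-2 symplecton, a singular subspace cannot properly
contain a line. -/
lemma key_no_big_singular {r : ℕ} (hpol : IsPolarSpace Ls H r)
    (hrk2 : HasPolarRank Ls H 2) (hHsub : IsSubspaceIn Ls Set.univ H)
    (hthickH : ∀ x ∈ H, ∃ G, LineIn Ls H G ∧ x ∈ G)
    {T L : Set P} (hT : IsSingularIn Ls H T) (hL : LineIn Ls H L) (hLT : L ⊆ T)
    {z : P} (hzT : z ∈ T) (hzL : z ∉ L) : False := by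
  have hTH : T ⊆ H := hT.1.1
  have hzH : z ∈ H := hTH hzT
  have CL1 : ∀ w ∈ H, ¬ Col Ls w z → ∀ t ∈ T, ∀ t' ∈ T, t ≠ t' →
      Col Ls w t → Col Ls w t' → False := by
    intro w hwH hwz t ht t' ht' htt' hwt hwt'
    exact delta_config hpol hrk2 (hTH ht) (hTH ht') hzH hwH
      (hT.2 t ht t' ht') (hT.2 t ht z hzT) (hT.2 t' ht' z hzT) htt'
      (colIn_of_col hHsub hwH (hTH ht) hwt)
      (colIn_of_col hHsub hwH (hTH ht') hwt')
      (fun hc => hwz (col_of_colIn hc))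
  have SUBN : ∀ w ∈ H, ¬ Col Ls w z → ∀ p ∈ T, Col Ls w p →
      ∀ N, LineIn Ls H N → w ∈ N → ∀ v ∈ N, ¬ Col Ls v p → False := by
    intro w hwH hwz p hpT hwp N hN hwN v hvN hvp
    have hpH : p ∈ H := hTH hpT
    have hpN : p ∉ N := fun h => hvp (Or.inr ⟨N, hN.1, hvN, h⟩)
    have hzN : z ∉ N := fun h => hwz (Or.inr ⟨N, hN.1, hwN, h⟩)
    rcases hpol.2.2.2 z hzH N hN hzN with ⟨n, ⟨hnN, hzn⟩, -⟩ | hall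
    · have hnw : n ≠ w := fun e => hwz (col_symm (col_of_colIn (e ▸ hzn)))
      have hnH : n ∈ H := hN.2 hnN
      have hwn : Col Ls w n := Or.inr ⟨N, hN.1, hwN, hnN⟩
      by_cases hnT : n ∈ T
      · exact CL1 w hwH hwz n hnT p hpT (fun e => hpN (e ▸ hnN)) hwn hwp
      · have hnL : n ∉ L := fun h => hnT (hLT h)
        obtain ⟨l, hlL, hnl⟩ := bs_exists hpol hnH hL hnL
        have hnp : ¬ ColIn Ls H n p := by
          intro hc
          rcases hpol.2.2.2 p hpH N hN hpN with ⟨y, -, huy⟩ | hall'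
          · have h1 : n = y := huy n ⟨hnN, colIn_symm hc⟩
            have h2 : w = y := huy w ⟨hwN, colIn_of_col hHsub hpH hwH (col_symm hwp)⟩
            exact hnw (h1.trans h2.symm)
          · exact hvp (col_symm (col_of_colIn (hall' v hvN)))
        exact delta_config hpol hrk2 hzH (hTH (hLT hlL)) hpH hnH
          (hT.2 z hzT l (hLT hlL)) (hT.2 z hzT p hpT) (hT.2 l (hLT hlL) p hpT)
          (fun e => hzL (e ▸ hlL)) (colIn_symm hzn) hnl hnp
    · exact hwz (col_symm (col_of_colIn (hall w hwN)))
  obtain ⟨s, hsH, hzs⟩ := hpol.2.1 z hzH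
  have hsz : ¬ Col Ls s z := fun h => hzs (colIn_of_col hHsub hzH hsH (col_symm h))
  have hsT : s ∉ T := fun h => hzs (hT.2 z hzT s h)
  have hsL : s ∉ L := fun h => hsT (hLT h)
  obtain ⟨p₀, hp0L, hsp0⟩ := bs_exists hpol hsH hL hsL
  have hp0T : p₀ ∈ T := hLT hp0L
  have hp0H : p₀ ∈ H := hTH hp0T
  have hOm : ∀ N, LineIn Ls H N → s ∈ N → ∀ v ∈ N, Col Ls v p₀ := by
    intro N hN hsN v hvN
    by_contra hvp
    exact SUBN s hsH hsz p₀ hp0T (col_of_colIn hsp0) N hN hsN v hvN hvp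
  obtain ⟨h, hhH, hph⟩ := hpol.2.1 p₀ hp0H
  have hhp : ¬ Col Ls h p₀ := fun hc => hph (colIn_of_col hHsub hp0H hhH (col_symm hc))
  by_cases hhz : Col Ls h z
  · have hhL : h ∉ L := fun hmem => hhp (Or.inr ⟨L, hL.1, hmem, hp0L⟩)
    obtain ⟨l, hlL, hhl⟩ := bs_exists hpol hhH hL hhL
    exact delta_config hpol hrk2 hzH (hTH (hLT hlL)) hp0H hhH
      (hT.2 z hzT l (hLT hlL)) (hT.2 z hzT p₀ hp0T) (hT.2 l (hLT hlL) p₀ hp0T)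
      (fun e => hzL (e ▸ hlL))
      (colIn_of_col hHsub hhH hzH hhz) hhl
      (fun hc => hhp (col_of_colIn hc))
  · have hhs : ¬ Col Ls h s := by
      intro hc
      have hne : h ≠ s := fun e => hhp (e ▸ col_of_colIn hsp0)
      rcases hc with e | ⟨N, hN, hhN, hsN⟩
      · exact hne e
      · have hNH : N ⊆ H := hHsub.2 N ⟨hN, Set.subset_univ N⟩ h hhN s hsN hne hhH hsH
        exact hhp (hOm N ⟨hN, hNH⟩ hsN h hhN)
    obtain ⟨G, hG, hsG⟩ := hthickH s hsH
    have hhG : h ∉ G := fun hmem => hhs (Or.inr ⟨G, hG.1, hmem, hsG⟩)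
    rcases hpol.2.2.2 h hhH G hG hhG with ⟨m, ⟨hmG, hhm⟩, -⟩ | hall
    · have hmH : m ∈ H := hG.2 hmG
      have hms : Col Ls m s := Or.inr ⟨G, hG.1, hmG, hsG⟩
      have hmp0 : Col Ls m p₀ := hOm G hG hsG m hmG
      have hmnep0 : m ≠ p₀ := fun e => hhp (e ▸ col_of_colIn hhm)
      by_cases hmz : Col Ls m z
      · exact delta_config hpol hrk2 hp0H hmH hzH hsH
          (colIn_of_col hHsub hp0H hmH (col_symm hmp0))
          (hT.2 p₀ hp0T z hzT)
          (colIn_of_col hHsub hmH hzH hmz)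
          (fun e => hmnep0 e.symm)
          hsp0
          (colIn_of_col hHsub hsH hmH (col_symm hms))
          (fun hc => hsz (col_of_colIn hc))
      · have hmh : Col Ls m h := col_symm (col_of_colIn hhm)
        have hmneh : m ≠ h := fun e => hhs (e ▸ hms)
        rcases hmh with e | ⟨N, hN, hmN, hhN⟩
        · exact hmneh e
        · have hNH : N ⊆ H := hHsub.2 N ⟨hN, Set.subset_univ N⟩ m hmN h hhN hmneh hmH hhH
          exact SUBN m hmH hmz p₀ hp0T hmp0 N ⟨hN, hNH⟩ hmN h hhN hhp
    · exact hhs (col_of_colIn (hall s hsG))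

end AuxLemmas

/-- The block joining `x₁` and `x₂` in the construction of induced spreads
contains no point of the symplecton `H`. -/
theorem joining_block_avoids_symp (Ls : Set (Set P))
    (hΓ : ImbrexGeometry Ls) (hrk : SympRank Ls 2) (hthick : ThickSymps Ls)
    (H B : Set P) (hH : IsSymp Ls H) (hB : IsBlock Ls B) (hdisj : B ∩ H = ∅)
    (L₁ L₂ : Set P) (hL₁ : LineIn Ls H L₁) (hL₂ : LineIn Ls H L₂)
    (hnc : L₁ ∩ L₂ = ∅) (hL₁s : InSpreadOf Ls H B L₁)
    (B₁ B₂ : Set P) (hB₁ : IsBlock Ls B₁) (hB₂ : IsBlock Ls B₂)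
    (hL₁B : L₁ ⊆ B₁) (hL₂B : L₂ ⊆ B₂)
    (x₁ : P) (hx₁ : x₁ ∈ B₁) (hx₁L : x₁ ∉ L₁)
    (x₂ : P) (hx₂ : x₂ ∈ B₂) (hcol : Col Ls x₁ x₂)
    (huniq : ∀ y ∈ B₂, Col Ls x₁ y → y = x₂)
    (B' : Set P) (hB' : IsBlock Ls B') (hx₁' : x₁ ∈ B') (hx₂' : x₂ ∈ B') :
    B' ∩ H = ∅ := by
  classical
  obtain ⟨a, b, hab, hscH⟩ := hH
  obtain ⟨S, hscS, r, hr2, hpolS⟩ := hΓ.spp.pps2 a b hab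
  have hSH : S = H :=
    Set.Subset.antisymm (hscS.2.2.2 H hscH.1 hscH.2.1 hscH.2.2.1)
      (hscH.2.2.2 S hscS.1 hscS.2.1 hscS.2.2.1)
  have hpol : IsPolarSpace Ls H r := hSH ▸ hpolS
  have hrk2 : HasPolarRank Ls H 2 := hrk H ⟨a, b, hab, hscH⟩
  have hHconv : IsConvex Ls H := hscH.1
  have hHsub : IsSubspaceIn Ls Set.univ H := hHconv.1
  have hthickH : ∀ x ∈ H, ∃ G, LineIn Ls H G ∧ x ∈ G := by
    intro x hx
    obtain ⟨G₁, G₂, G₃, h1, h2, h3, _, _, _, m1, _, _⟩ := hthick H ⟨a, b, hab, hscH⟩ x hx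
    exact ⟨G₁, h1, m1⟩
  have blockInter : ∀ {Bb : Set P}, IsBlock Ls Bb → IsSingularIn Ls H (Bb ∩ H) := by
    intro Bb hBb
    refine ⟨⟨Set.inter_subset_right, ?_⟩, ?_⟩
    · intro M hM x hxM y hyM hxy hxT hyT w hw
      exact ⟨hBb.1.1.2 M ⟨hM.1, Set.subset_univ M⟩ x hxM y hyM hxy hxT.1 hyT.1 hw,
        hM.2 hw⟩
    · intro u hu v hv
      exact colIn_of_col hHsub hu.2 hv.2 (col_of_colIn (hBb.1.2 u hu.1 v hv.1))
  have perpSing : ∀ {x : P}, x ∉ H → IsSingularIn Ls H {u | u ∈ H ∧ Col Ls x u} := by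
    intro x hxH
    refine ⟨⟨fun u hu => hu.1, ?_⟩, ?_⟩
    · intro M hM u huM v hvM huv huT hvT w hw
      refine ⟨hM.2 hw, ?_⟩
      have hxM : x ∉ M := fun hmem => hxH (hM.2 hmem)
      rcases hΓ.spp.pps1 x M hM.1 hxM with hnone | ⟨y, ⟨hyM, hyc⟩, huniq'⟩ | hall
      · exact absurd huT.2 (hnone u huM)
      · exact absurd ((huniq' u ⟨huM, huT.2⟩).trans (huniq' v ⟨hvM, hvT.2⟩).symm) huv
      · exact hall w hw
    · intro u hu v hv
      by_cases hc : Col Ls u v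
      · exact colIn_of_col hHsub hu.1 hv.1 hc
      · exact absurd (hHconv.2 u hu.1 v hv.1 hc x (col_symm hu.2) hv.2) hxH
  have hx1H : x₁ ∉ H := by
    intro h1H
    exact key_no_big_singular hpol hrk2 hHsub hthickH (blockInter hB₁) hL₁
      (fun u hu => ⟨hL₁B hu, hL₁.2 hu⟩) (⟨hx₁, h1H⟩ : x₁ ∈ B₁ ∩ H) hx₁L
  have hL1perp : L₁ ⊆ {u | u ∈ H ∧ Col Ls x₁ u} := fun u hu =>
    ⟨hL₁.2 hu, col_of_colIn (hB₁.1.2 x₁ hx₁ u (hL₁B hu))⟩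
  have hx2H : x₂ ∉ H := by
    intro h2H
    have hx2L2 : x₂ ∈ L₂ := by
      by_contra h2L
      exact key_no_big_singular hpol hrk2 hHsub hthickH (blockInter hB₂) hL₂
        (fun u hu => ⟨hL₂B hu, hL₂.2 hu⟩) (⟨hx₂, h2H⟩ : x₂ ∈ B₂ ∩ H) h2L
    have hx2L1 : x₂ ∈ L₁ := by
      by_contra h2L1
      exact key_no_big_singular hpol hrk2 hHsub hthickH (perpSing hx1H) hL₁ hL1perp
        ⟨h2H, hcol⟩ h2L1
    have hmem : x₂ ∈ L₁ ∩ L₂ := ⟨hx2L1, hx2L2⟩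
    rw [hnc] at hmem
    exact absurd hmem (Set.notMem_empty x₂)
  apply Set.eq_empty_iff_forall_notMem.2
  intro w hw
  have hwH : w ∈ H := hw.2
  have hc1 : Col Ls x₁ w := col_of_colIn (hB'.1.2 x₁ hx₁' w hw.1)
  have hc2 : Col Ls x₂ w := col_of_colIn (hB'.1.2 x₂ hx₂' w hw.1)
  have hwL1 : w ∈ L₁ := by
    by_contra hwl
    exact key_no_big_singular hpol hrk2 hHsub hthickH (perpSing hx1H) hL₁ hL1perp
      ⟨hwH, hc1⟩ hwl
  have hwL2 : w ∈ L₂ := by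
    by_contra hwl
    exact key_no_big_singular hpol hrk2 hHsub hthickH (perpSing hx2H) hL₂
      (fun u hu => ⟨hL₂.2 hu, col_of_colIn (hB₂.1.2 x₂ hx₂ u (hL₂B hu))⟩)
      ⟨hwH, hc2⟩ hwl
  have hmem : w ∈ L₁ ∩ L₂ := ⟨hwL1, hwL2⟩
  rw [hnc] at hmem
  exact absurd hmem (Set.notMem_empty w)
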